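/- Let c ∈ ℝ, ρ(r) = -1/(r - i c), ρ̄ = conj(ρ), and set y₁(r) = ρ̄(ρ+ρ̄), y₂(r) = ρ̄(ρ̄-2ρ)/ρ³. If a, b ∈ ℂ and there exists r₀ > 0 such that a y₁(r₀) + b y₂(r₀) = 0 and a y₁'(r₀) + b y₂'(r₀) = 0, then a = b = 0. -/

import Mathlib

open Complex

/-- Kerr optical scalar ρ(r) = -1/(r - i c). -/
noncomputable def rhoK (c : ℝ) (r : ℝ) : ℂ := -1 / ((r : ℂ) - c * Complex.I)

/-- Complex conjugate ρ̄. -/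
noncomputable def rhoKbar (c : ℝ) (r : ℝ) : ℂ := (starRingEnd ℂ) (rhoK c r)

/-- y₁ = ρ̄(ρ+ρ̄). -/
noncomputable def y₁K (c : ℝ) (r : ℝ) : ℂ := rhoKbar c r * (rhoK c r + rhoKbar c r)

/-- y₂ = ρ̄(ρ̄-2ρ)/ρ³. -/
noncomputable def y₂K (c : ℝ) (r : ℝ) : ℂ :=
  rhoKbar c r * (rhoKbar c r - 2 * rhoK c r) / (rhoK c r) ^ 3

/-! Along the transport direction ρ and ρ̄ obey þρ = ρ², þρ̄ = ρ̄², so the derivatives of y₁, y₂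
are again rational in ρ, ρ̄ and their Wronskian y₁y₂' - y₂y₁' simplifies to 6ρ̄². For r ≠ 0 this
does not vanish, so the 2×2 system for (a, b) has only the trivial solution. -/

lemma eq_zero_and_eq_zero_of_mul_sub_mul_ne_zero {K : Type*} [Field K] {a b f g f' g' : K}
    (hW : f * g' - g * f' ≠ 0) (h0 : a * f + b * g = 0) (h1 : a * f' + b * g' = 0) :
    a = 0 ∧ b = 0 := by
  have ha : a * (f * g' - g * f') = 0 := by linear_combination g' * h0 - g * h1
  have hb : b * (f * g' - g * f') = 0 := by linear_combination f * h1 - f' * h0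
  exact ⟨(mul_eq_zero.mp ha).resolve_right hW, (mul_eq_zero.mp hb).resolve_right hW⟩

lemma rhoK_ne_zero {c r : ℝ} (hr : r ≠ 0) : rhoK c r ≠ 0 :=
  div_ne_zero (neg_ne_zero.mpr one_ne_zero) fun h => hr (by simpa using congrArg re h)

lemma rhoKbar_ne_zero {c r : ℝ} (hρ : rhoK c r ≠ 0) : rhoKbar c r ≠ 0 :=
  (map_ne_zero _).mpr hρ

-- `rhoK c r = 0` only through the junk value `-1 / 0`, i.e. exactly when `r - c * I = 0`.
lemma hasDerivAt_rhoK {c r : ℝ} (hρ : rhoK c r ≠ 0) : HasDerivAt (rhoK c) (rhoK c r ^ 2) r := by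
  have hd : (r : ℂ) - c * I ≠ 0 := fun h => hρ (by simp [rhoK, h])
  have : HasDerivAt (rhoK c) _ r :=
    (hasDerivAt_const r (-1 : ℂ)).div ((hasDerivAt_id r).ofReal_comp.sub_const ((c : ℂ) * I)) hd
  refine this.congr_deriv ?_
  simp [rhoK, div_pow]

lemma hasDerivAt_rhoKbar {c r : ℝ} (hρ : rhoK c r ≠ 0) :
    HasDerivAt (rhoKbar c) (rhoKbar c r ^ 2) r := by
  have := (hasDerivAt_rhoK hρ).star
  rw [star_pow] at this
  exact this

lemma deriv_y₁K {c r : ℝ} (hρ : rhoK c r ≠ 0) :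
    deriv (y₁K c) r =
      rhoKbar c r * (rhoK c r ^ 2 + rhoK c r * rhoKbar c r + 2 * rhoKbar c r ^ 2) := by
  have : HasDerivAt (y₁K c) _ r :=
    (hasDerivAt_rhoKbar hρ).mul ((hasDerivAt_rhoK hρ).add (hasDerivAt_rhoKbar hρ))
  rw [this.deriv]
  ring

lemma deriv_y₂K {c r : ℝ} (hρ : rhoK c r ≠ 0) :
    deriv (y₂K c) r = rhoKbar c r *
      (2 * rhoKbar c r ^ 2 - 5 * rhoK c r * rhoKbar c r + 4 * rhoK c r ^ 2) / rhoK c r ^ 3 := by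
  have hρ' := hasDerivAt_rhoK hρ
  have hρbar := hasDerivAt_rhoKbar hρ
  have : HasDerivAt (y₂K c) _ r :=
    (hρbar.mul (hρbar.sub (hρ'.const_mul 2))).div (hρ'.pow 3) (pow_ne_zero 3 hρ)
  rw [this.deriv, Pi.mul_apply, Pi.sub_apply]
  field_simp
  ring

lemma wronskian_y₁K_y₂K {c r : ℝ} (hρ : rhoK c r ≠ 0) :
    y₁K c r * deriv (y₂K c) r - y₂K c r * deriv (y₁K c) r = 6 * rhoKbar c r ^ 2 := by
  rw [deriv_y₁K hρ, deriv_y₂K hρ, y₁K, y₂K]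
  field_simp
  ring

/-- linear independence of y₁, y₂ at any point r₀ > 0. -/
theorem stmt4 (c : ℝ) (a b : ℂ) (r₀ : ℝ) (hr₀ : 0 < r₀)
    (h0 : a * y₁K c r₀ + b * y₂K c r₀ = 0)
    (h1 : a * deriv (y₁K c) r₀ + b * deriv (y₂K c) r₀ = 0) :
    a = 0 ∧ b = 0 := by
  have hρ : rhoK c r₀ ≠ 0 := rhoK_ne_zero hr₀.ne'
  refine eq_zero_and_eq_zero_of_mul_sub_mul_ne_zero ?_ h0 h1
  rw [wronskian_y₁K_y₂K hρ]
  exact mul_ne_zero (by norm_num) (pow_ne_zero 2 (rhoKbar_ne_zero hρ))
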